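/- For every integer n ≥ 1, sum over k from 1 to n of s(n,k) * B_{k-1} equals (-1)^{n-1} * (n-1)! * H_n, where B_j are Bernoulli numbers and H_n is the n-th harmonic number. -/
import Mathlib

/-- Unsigned Stirling numbers of the first kind. -/
def S1u : ℕ → ℕ → ℕ
  | 0, 0 => 1
  | 0, _ + 1 => 0
  | _ + 1, 0 => 0
  | n + 1, k + 1 => n * S1u n (k + 1) + S1u n k

section Aux
open Polynomial Finset

noncomputable def LB (p : ℚ[X]) : ℚ := p.sum fun n a => a * _root_.bernoulli n

lemma LB_eq (p : ℚ[X]) (N : ℕ) (h : p.natDegree < N) :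
    LB p = ∑ j ∈ range N, p.coeff j * _root_.bernoulli j :=
  Polynomial.sum_over_range' p (fun n => zero_mul (_root_.bernoulli n)) N h

lemma LB_add (p q : ℚ[X]) : LB (p + q) = LB p + LB q :=
  Polynomial.sum_add_index p q _ (fun n => zero_mul (_root_.bernoulli n)) (fun _ _ _ => add_mul _ _ _)

lemma LB_Cmul (c : ℚ) (p : ℚ[X]) : LB (C c * p) = c * LB p := by
  rw [LB_eq (C c * p) (p.natDegree + 1) (lt_of_le_of_lt (natDegree_C_mul_le c p) (lt_add_one _)),
    LB_eq p (p.natDegree + 1) (lt_add_one _), Finset.mul_sum]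
  simp [coeff_C_mul, mul_assoc]

lemma LB_shift (p : ℚ[X]) : LB (p.comp (X + 1)) = LB p + p.coeff 1 := by
  induction p using Polynomial.induction_on' with
  | add p q hp hq =>
      rw [add_comp, LB_add, LB_add, hp, hq, coeff_add]; ring
  | monomial m a =>
      rw [monomial_comp, ← C_mul_X_pow_eq_monomial, LB_Cmul]
      have hdeg : ((X + 1 : ℚ[X]) ^ m).natDegree < m + 1 := by
        have h1 : (X + 1 : ℚ[X]).natDegree = 1 := by
          simpa using natDegree_X_add_C (1 : ℚ)
        have := natDegree_pow_le (p := (X + 1 : ℚ[X])) (n := m)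
        rw [h1, mul_one] at this
        omega
      have h2 : LB ((X + 1 : ℚ[X]) ^ m) = ∑ j ∈ range (m + 1), (m.choose j : ℚ) * _root_.bernoulli j := by
        rw [LB_eq _ (m + 1) hdeg]
        refine Finset.sum_congr rfl fun j _ => ?_
        rw [coeff_X_add_one_pow]
      rw [h2, Finset.sum_range_succ, _root_.sum_bernoulli]
      rw [LB_eq (C a * X ^ m) (m + 1)
        (lt_of_le_of_lt (natDegree_C_mul_le a (X ^ m)) (by simp [natDegree_X_pow]))]
      simp only [coeff_C_mul, coeff_X_pow]
      have h3 : ∑ x ∈ range (m + 1), (a * if x = m then 1 else 0) * _root_.bernoulli x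
          = a * _root_.bernoulli m := by simp
      rw [h3, Nat.choose_self]
      rcases eq_or_ne m 1 with h | h <;> simp [h, eq_comm] <;> ring

noncomputable def fall : ℕ → ℚ[X]
  | 0 => 1
  | n + 1 => fall n * (X - C (n : ℚ))

lemma fall_monic (n : ℕ) : (fall n).Monic := by
  induction n with
  | zero => exact monic_one
  | succ n ih => exact ih.mul (monic_X_sub_C _)

lemma fall_natDegree (n : ℕ) : (fall n).natDegree = n := by
  induction n with
  | zero => simp [fall]
  | succ n ih =>
      rw [fall, (fall_monic n).natDegree_mul (monic_X_sub_C _), ih, natDegree_X_sub_C]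

lemma fall_coeff_zero (n : ℕ) : (fall (n + 1)).coeff 0 = 0 := by
  induction n with
  | zero => simp [fall]
  | succ n ih => rw [fall, mul_coeff_zero, ih, zero_mul]

-- coeff of p * (X - C c)
lemma coeff_mul_lin (p : ℚ[X]) (c : ℚ) (k : ℕ) :
    (p * (X - C c)).coeff (k + 1) = p.coeff k - c * p.coeff (k + 1) := by
  rw [mul_sub, coeff_sub, mul_comm p X, coeff_X_mul, mul_comm p (C c), coeff_C_mul]

lemma fall_coeff_one (n : ℕ) : (fall (n + 1)).coeff 1 = (-1) ^ n * n.factorial := by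
  induction n with
  | zero => simp [fall]
  | succ n ih =>
      rw [fall, coeff_mul_lin, fall_coeff_zero, ih, Nat.factorial_succ]
      push_cast
      ring

lemma fall_coeff_two (n : ℕ) :
    (fall (n + 1)).coeff 2 = (-1) ^ (n + 1) * n.factorial * harmonic n := by
  induction n with
  | zero => simp [fall, coeff_X]
  | succ n ih =>
      rw [fall, show (2 : ℕ) = 1 + 1 from rfl, coeff_mul_lin, fall_coeff_one, ih,
        harmonic_succ, Nat.factorial_succ]
      have h : ((n : ℚ) + 1) ≠ 0 := by positivity
      push_cast
      field_simp
      ring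

lemma S1u_eq_zero : ∀ {n k : ℕ}, n < k → S1u n k = 0 := by
  intro n
  induction n with
  | zero => intro k h; match k, h with | k + 1, _ => rfl
  | succ n ih =>
      intro k h
      match k, h with
      | k + 1, h =>
          show n * S1u n (k + 1) + S1u n k = 0
          rw [ih (by omega), ih (by omega), mul_zero]

lemma fall_coeff_S1u (n : ℕ) : ∀ k, k ≤ n → (fall n).coeff k = (-1 : ℚ) ^ (n - k) * S1u n k := by
  induction n with
  | zero => intro k hk; interval_cases k; simp [fall, S1u]
  | succ n ih =>
      intro k hk
      match k with
      | 0 => simp [fall_coeff_zero, show S1u (n + 1) 0 = 0 from rfl]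
      | k + 1 =>
          rw [fall, coeff_mul_lin, show S1u (n + 1) (k + 1) = n * S1u n (k + 1) + S1u n k from rfl]
          rcases Nat.lt_or_ge k n with h | h
          · rw [ih k (by omega), ih (k + 1) (by omega)]
            have h1 : n - k = (n - (k + 1)) + 1 := by omega
            have h2 : n + 1 - (k + 1) = (n - (k + 1)) + 1 := by omega
            rw [h1, h2]
            push_cast
            ring
          · have hk' : n = k := by omega
            subst hk'
            rw [ih n le_rfl, coeff_eq_zero_of_natDegree_lt (by rw [fall_natDegree]; omega),
              S1u_eq_zero (Nat.lt_succ_self n)]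
            simp

lemma fall_succ_comp (n : ℕ) : (fall (n + 1)).comp (X + 1) = (X + 1) * fall n := by
  induction n with
  | zero => simp [fall]
  | succ n ih =>
      rw [show fall (n + 1 + 1) = fall (n + 1) * (X - C ((n + 1 : ℕ) : ℚ)) from rfl,
        mul_comp, ih, sub_comp, X_comp, C_comp, show fall (n + 1) = fall n * (X - C (n : ℚ)) from rfl,
        Nat.cast_succ, C_add, C_1]
      ring

noncomputable def rr (m : ℕ) : ℚ[X] := (fall m).comp (X - 1)

lemma rr_comp (m : ℕ) : (rr m).comp (X + 1) = fall m := by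
  rw [rr, comp_assoc]
  have : (X - 1 : ℚ[X]).comp (X + 1) = X := by
    rw [sub_comp, X_comp, one_comp]; ring
  rw [this, comp_X]

lemma X_mul_rr (m : ℕ) : X * rr m = fall (m + 1) := by
  induction m with
  | zero => simp [rr, fall]
  | succ m ih =>
      rw [rr, show fall (m + 1) = fall m * (X - C ((m : ℕ) : ℚ)) from rfl, mul_comp,
        sub_comp, X_comp, C_comp, ← rr]
      rw [show fall (m + 1 + 1) = fall (m + 1) * (X - C ((m + 1 : ℕ) : ℚ)) from rfl, ← ih,
        Nat.cast_succ, C_add, C_1]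
      ring

lemma rr_coeff (m j : ℕ) : (rr m).coeff j = (fall (m + 1)).coeff (j + 1) := by
  rw [← X_mul_rr, coeff_X_mul]

lemma rr_natDegree (m : ℕ) : (rr m).natDegree = m := by
  rw [rr, natDegree_comp, fall_natDegree, show (1 : ℚ[X]) = C 1 from (C_1).symm,
    natDegree_X_sub_C, mul_one]

lemma LB_fall (m : ℕ) : ((m : ℚ) + 1) * LB (fall m) = (-1) ^ m * m.factorial := by
  have h := LB_shift (fall (m + 1))
  rw [fall_succ_comp] at h
  have expand : (X + 1) * fall m = fall (m + 1) + C ((m : ℚ) + 1) * fall m := by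
    rw [show fall (m + 1) = fall m * (X - C ((m : ℕ) : ℚ)) from rfl, C_add, C_1]
    ring
  rw [expand, LB_add, LB_Cmul, fall_coeff_one] at h
  linarith

lemma LB_rr (m : ℕ) : LB (rr m) = LB (fall m) - (fall (m + 1)).coeff 2 := by
  have h := LB_shift (rr m)
  rw [rr_comp, rr_coeff] at h
  linarith

end Aux

theorem stirling1_bernoulli_harmonic (n : ℕ) (hn : 1 ≤ n) :
    ∑ k ∈ Finset.Icc 1 n,
      ((-1 : ℚ) ^ (n - k) * S1u n k) * bernoulli (k - 1) =
      (-1) ^ (n - 1) * (Nat.factorial (n - 1)) * harmonic n := by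
  obtain ⟨m, rfl⟩ : ∃ m, n = m + 1 := ⟨n - 1, by omega⟩
  have hIcc : Finset.Icc 1 (m + 1)
      = Finset.map ⟨Nat.succ, Nat.succ_injective⟩ (Finset.range (m + 1)) := by
    ext k
    simp only [Finset.mem_Icc, Finset.mem_map, Finset.mem_range, Function.Embedding.coeFn_mk]
    constructor
    · rintro ⟨h1, h2⟩; exact ⟨k - 1, by omega, by omega⟩
    · rintro ⟨j, hj, rfl⟩; omega
  rw [hIcc, Finset.sum_map]
  simp only [Function.Embedding.coeFn_mk]
  have hterm : ∀ j ∈ Finset.range (m + 1),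
      ((-1 : ℚ) ^ (m + 1 - Nat.succ j) * S1u (m + 1) (Nat.succ j))
        * _root_.bernoulli (Nat.succ j - 1)
      = (rr m).coeff j * _root_.bernoulli j := by
    intro j hj
    rw [Finset.mem_range] at hj
    rw [rr_coeff, fall_coeff_S1u (m + 1) (j + 1) (by omega)]
    norm_num
  rw [Finset.sum_congr rfl hterm, ← LB_eq (rr m) (m + 1) (by rw [rr_natDegree]; omega)]
  rw [LB_rr, fall_coeff_two]
  have hfall := LB_fall m
  have hm1 : ((m : ℚ) + 1) ≠ 0 := by positivity
  have hLB : LB (fall m) = (-1) ^ m * m.factorial / ((m : ℚ) + 1) := by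
    field_simp
    linarith
  rw [hLB, harmonic_succ]
  simp only [Nat.add_sub_cancel]
  push_cast
  field_simp
  ring
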